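/- arXiv:2102.09651 — 5 statements merged into one kernel-verified Lean document; each statement's English description precedes it below -/
import Mathlib

section
/- For any nonnegative integers α and n, letting G be geometric on {0,1,2,...} with parameter 1-q and B_n a Binomial(n,p) random variable independent of G, the ratio Pr(G+B_{n+1}=α)/Pr(G+B_n=α) is at most (p+q(1-p))/q. -/
open Finset

/-- pmf of a geometric distribution on {0,1,2,...} with success parameter `1-q`. -/
noncomputable def geomPMF (q : ℝ) (k : ℕ) : ℝ := q ^ k * (1 - q)

/-- pmf of a Bernoulli distribution with parameter `p`. -/
noncomputable def bernPMF (p : ℝ) (k : ℕ) : ℝ :=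
  if k = 0 then 1 - p else if k = 1 then p else 0

/-- pmf of a Binomial(n, p) distribution. -/
noncomputable def binomPMF (n : ℕ) (p : ℝ) (k : ℕ) : ℝ :=
  (n.choose k : ℝ) * p ^ k * (1 - p) ^ (n - k)

/-- pmf of the sum of two independent random variables with pmfs `f` and `g`. -/
noncomputable def convPMF (f g : ℕ → ℝ) (α : ℕ) : ℝ :=
  ∑ k ∈ Finset.range (α + 1), f k * g (α - k)

/-!
Conditioning on the last Bernoulli trial, `G + B_{n+1}` equals `G + B_n` or `G + B_n + 1`, so
`Pr(G + B_{n+1} = α) = (1 - p) S(α) + p S(α - 1)` with `S(α) = Pr(G + B_n = α)`. Conditioning on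
`G = 0` or `G ≥ 1` and using memorylessness gives `S(α) = q S(α - 1) + (1 - q) Pr(B_n = α)`, so
`q S(α - 1) ≤ S(α)`, and therefore `Pr(G + B_{n+1} = α) ≤ (1 - p + p / q) S(α)`.
-/

lemma geomPMF_nonneg {q : ℝ} (hq0 : 0 ≤ q) (hq1 : q ≤ 1) (k : ℕ) : 0 ≤ geomPMF q k :=
  mul_nonneg (pow_nonneg hq0 k) (sub_nonneg.mpr hq1)

lemma geomPMF_succ (q : ℝ) (k : ℕ) : geomPMF q (k + 1) = q * geomPMF q k := by
  simp only [geomPMF, pow_succ]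
  ring

lemma binomPMF_nonneg {p : ℝ} (hp0 : 0 ≤ p) (hp1 : p ≤ 1) (n k : ℕ) : 0 ≤ binomPMF n p k := by
  unfold binomPMF
  have : 0 ≤ 1 - p := sub_nonneg.mpr hp1
  positivity

lemma binomPMF_succ_zero (n : ℕ) (p : ℝ) : binomPMF (n + 1) p 0 = (1 - p) * binomPMF n p 0 := by
  simp only [binomPMF, Nat.choose_zero_right, Nat.sub_zero, pow_succ]
  ring

lemma binomPMF_succ_succ (n k : ℕ) (p : ℝ) :
    binomPMF (n + 1) p (k + 1) = (1 - p) * binomPMF n p (k + 1) + p * binomPMF n p k := by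
  unfold binomPMF
  rcases lt_trichotomy k n with hkn | rfl | hnk
  · obtain ⟨m, rfl⟩ := Nat.exists_eq_add_of_lt hkn
    rw [Nat.choose_succ_succ, show k + m + 1 + 1 - (k + 1) = m + 1 by omega,
      show k + m + 1 - (k + 1) = m by omega, show k + m + 1 - k = m + 1 by omega]
    push_cast
    ring
  · simp only [Nat.choose_succ_self, Nat.choose_self, Nat.sub_self, Nat.cast_zero, Nat.cast_one]
    ring
  · simp only [Nat.choose_eq_zero_of_lt hnk, Nat.choose_eq_zero_of_lt (Nat.lt_succ_of_lt hnk),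
      Nat.choose_eq_zero_of_lt (Nat.succ_lt_succ hnk), Nat.cast_zero]
    ring

lemma convPMF_nonneg {f g : ℕ → ℝ} (hf : ∀ k, 0 ≤ f k) (hg : ∀ k, 0 ≤ g k) (α : ℕ) :
    0 ≤ convPMF f g α :=
  Finset.sum_nonneg fun k _ => mul_nonneg (hf k) (hg (α - k))

lemma convPMF_binomPMF_succ_zero (f : ℕ → ℝ) (n : ℕ) (p : ℝ) :
    convPMF f (binomPMF (n + 1) p) 0 = (1 - p) * convPMF f (binomPMF n p) 0 := by
  simp only [convPMF, zero_add, Finset.sum_range_one, Nat.sub_zero, binomPMF_succ_zero]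
  ring

lemma convPMF_binomPMF_succ (f : ℕ → ℝ) (n : ℕ) (p : ℝ) (α : ℕ) :
    convPMF f (binomPMF (n + 1) p) (α + 1)
      = (1 - p) * convPMF f (binomPMF n p) (α + 1) + p * convPMF f (binomPMF n p) α := by
  have hpascal : ∀ k ∈ Finset.range (α + 1), f k * binomPMF (n + 1) p (α + 1 - k)
      = (1 - p) * (f k * binomPMF n p (α + 1 - k)) + p * (f k * binomPMF n p (α - k)) := by
    intro k hk
    rw [show α + 1 - k = α - k + 1 by grind, binomPMF_succ_succ]
    ring
  simp only [convPMF, Finset.sum_range_succ _ (α + 1), Nat.sub_self, binomPMF_succ_zero,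
    Finset.sum_congr rfl hpascal, Finset.sum_add_distrib, ← Finset.mul_sum]
  ring

lemma convPMF_geomPMF_succ (q : ℝ) (g : ℕ → ℝ) (α : ℕ) :
    convPMF (geomPMF q) g (α + 1) = q * convPMF (geomPMF q) g α + (1 - q) * g (α + 1) := by
  simp only [convPMF, Finset.sum_range_succ' _ (α + 1), geomPMF_succ, Nat.add_sub_add_right,
    Finset.mul_sum, Nat.sub_zero, mul_assoc]
  simp only [geomPMF, pow_zero, one_mul]

lemma mul_convPMF_geomPMF_le_succ {q : ℝ} (hq1 : q ≤ 1) {g : ℕ → ℝ} (hg : ∀ k, 0 ≤ g k)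
    (α : ℕ) : q * convPMF (geomPMF q) g α ≤ convPMF (geomPMF q) g (α + 1) := by
  rw [convPMF_geomPMF_succ]
  nlinarith [hg (α + 1)]

lemma mul_convPMF_geomPMF_binomPMF_succ_le {p q : ℝ} (hp0 : 0 ≤ p) (hp1 : p ≤ 1)
    (hq0 : 0 ≤ q) (hq1 : q ≤ 1) (n α : ℕ) :
    q * convPMF (geomPMF q) (binomPMF (n + 1) p) α
      ≤ (p + q * (1 - p)) * convPMF (geomPMF q) (binomPMF n p) α := by
  have hS := convPMF_nonneg (geomPMF_nonneg hq0 hq1) (binomPMF_nonneg hp0 hp1 n)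
  cases α with
  | zero =>
    rw [convPMF_binomPMF_succ_zero]
    nlinarith [hS 0]
  | succ α =>
    rw [convPMF_binomPMF_succ]
    nlinarith [mul_convPMF_geomPMF_le_succ hq1 (binomPMF_nonneg hp0 hp1 n) α]

theorem geom_binom_succ_ratio_upper (p q : ℝ) (hp0 : 0 < p) (hp1 : p < 1)
    (hq0 : 0 < q) (hq1 : q < 1) (α n : ℕ) :
    convPMF (geomPMF q) (binomPMF (n + 1) p) α / convPMF (geomPMF q) (binomPMF n p) α
      ≤ (p + q * (1 - p)) / q := by
  have hS : 0 ≤ convPMF (geomPMF q) (binomPMF n p) α :=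
    convPMF_nonneg (geomPMF_nonneg hq0.le hq1.le) (binomPMF_nonneg hp0.le hp1.le n) α
  have hbound : 0 ≤ (p + q * (1 - p)) / q := by
    have : 0 ≤ 1 - p := by linarith
    positivity
  refine div_le_of_le_mul₀ hS hbound ?_
  rw [div_mul_eq_mul_div, le_div_iff₀ hq0, mul_comm]
  exact mul_convPMF_geomPMF_binomPMF_succ_le hp0.le hp1.le hq0.le hq1.le n α
end

section
/- For any nonnegative integers α and n, letting G be geometric on {0,1,2,...} with parameter 1-q and B_n a Binomial(n,p) random variable independent of G, the ratio Pr(G+B_n=α)/Pr(G+B_{n+1}=α) is at most 1/(1-p). -/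
open Finset

theorem geom_binom_ratio_lower (p q : ℝ) (hp0 : 0 < p) (hp1 : p < 1)
    (hq0 : 0 < q) (hq1 : q < 1) (α n : ℕ) :
    convPMF (geomPMF q) (binomPMF n p) α / convPMF (geomPMF q) (binomPMF (n + 1) p) α
      ≤ 1 / (1 - p) := by
  have hp' : (0:ℝ) < 1 - p := by linarith
  have hterm : ∀ m : ℕ, (1 - p) * binomPMF n p m ≤ binomPMF (n + 1) p m := by
    intro m
    unfold binomPMF
    rcases le_or_gt m n with hm | hm
    · have he : n + 1 - m = (n - m) + 1 := by omega
      rw [he, pow_succ]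
      have hc : (n.choose m : ℝ) ≤ ((n+1).choose m : ℝ) := by
        exact_mod_cast Nat.choose_le_choose m (Nat.le_succ n)
      have h1 : (0:ℝ) ≤ p ^ m := by positivity
      have h2 : (0:ℝ) ≤ (1 - p) ^ (n - m) := by positivity
      nlinarith [mul_nonneg h1 h2, mul_le_mul_of_nonneg_right hc (mul_nonneg h1 h2)]
    · have : n.choose m = 0 := Nat.choose_eq_zero_of_lt hm
      rw [this]
      have : (0:ℝ) ≤ ((n+1).choose m : ℝ) * p ^ m * (1 - p) ^ (n + 1 - m) := by
        positivity
      simpa using this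
  have hgnn : ∀ k : ℕ, 0 ≤ geomPMF q k := by
    intro k; unfold geomPMF
    have hq' : (0:ℝ) < 1 - q := by linarith
    exact mul_nonneg (pow_nonneg hq0.le _) hq'.le
  have hbnn : ∀ N k : ℕ, 0 ≤ binomPMF N p k := by
    intro N k; unfold binomPMF
    exact mul_nonneg (mul_nonneg (Nat.cast_nonneg _) (pow_nonneg hp0.le _)) (pow_nonneg hp'.le _)
  have hden : 0 < convPMF (geomPMF q) (binomPMF (n + 1) p) α := by
    unfold convPMF
    have hmem : α ∈ Finset.range (α + 1) := Finset.self_mem_range_succ α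
    have hpos : 0 < geomPMF q α * binomPMF (n + 1) p (α - α) := by
      have : α - α = 0 := Nat.sub_self α
      rw [this]
      unfold geomPMF binomPMF
      simp only [Nat.choose_zero_right, pow_zero, Nat.sub_zero]
      have hq' : (0:ℝ) < 1 - q := by linarith
      have h := mul_pos (mul_pos (pow_pos hq0 α) hq') (pow_pos hp' (n+1))
      simpa using h
    calc (0:ℝ) < geomPMF q α * binomPMF (n + 1) p (α - α) := hpos
      _ ≤ _ := Finset.single_le_sum (fun k _ => mul_nonneg (hgnn k) (hbnn _ _)) hmem
  rw [div_le_div_iff₀ hden hp', one_mul]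
  calc convPMF (geomPMF q) (binomPMF n p) α * (1 - p)
      = ∑ k ∈ Finset.range (α + 1), geomPMF q k * ((1 - p) * binomPMF n p (α - k)) := by
        unfold convPMF; rw [Finset.sum_mul]; apply Finset.sum_congr rfl; intros; ring
    _ ≤ ∑ k ∈ Finset.range (α + 1), geomPMF q k * binomPMF (n + 1) p (α - k) := by
        apply Finset.sum_le_sum
        intro k _
        exact mul_le_mul_of_nonneg_left (hterm _) (hgnn k)
    _ = _ := rfl
end

section
/- For any nonnegative integers α, n, m, letting G be geometric on {0,1,2,...} with parameter 1-q and B_k Binomial(k,p) independent of G, the ratio Pr(G+B_{n+m}=α)/Pr(G+B_n=α) is at most ((p+q(1-p))/q)^m. -/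
open Finset

lemma binom_nonneg (n : ℕ) (p : ℝ) (hp0 : 0 ≤ p) (hp1 : p ≤ 1) (k : ℕ) :
    0 ≤ binomPMF n p k := by
  unfold binomPMF
  have h : (0:ℝ) ≤ 1 - p := by linarith
  have := Nat.cast_nonneg (α := ℝ) (n.choose k)
  positivity

lemma binom_succ (n : ℕ) (p : ℝ) (j : ℕ) :
    binomPMF (n+1) p (j+1) = (1-p) * binomPMF n p (j+1) + p * binomPMF n p j := by
  unfold binomPMF
  rcases le_or_gt (j+1) n with h | h
  · rw [Nat.choose_succ_succ]
    push_cast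
    have h2 : n - j = (n - (j+1)) + 1 := by omega
    rw [h2]
    ring
  · have h1 : n.choose (j+1) = 0 := Nat.choose_eq_zero_of_lt h
    have h2 : (n+1).choose (j+1) = n.choose j := by
      rw [Nat.choose_succ_succ, h1]; omega
    rw [h1, h2]
    have h3 : n - j = 0 := by omega
    have h4 : n + 1 - (j + 1) = 0 := by omega
    rw [h3, h4]
    push_cast
    ring

lemma conv_pos (p q : ℝ) (hp0 : 0 < p) (hp1 : p < 1) (hq0 : 0 < q) (hq1 : q < 1)
    (n α : ℕ) : 0 < convPMF (geomPMF q) (binomPMF n p) α := by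
  unfold convPMF
  have hmem : α ∈ Finset.range (α + 1) := by simp
  have hpos : 0 < geomPMF q α * binomPMF n p (α - α) := by
    simp only [Nat.sub_self]
    unfold geomPMF binomPMF
    simp only [Nat.choose_zero_right, pow_zero, Nat.sub_zero]
    push_cast
    have : (0:ℝ) < 1 - p := by linarith
    have : (0:ℝ) < 1 - q := by linarith
    positivity
  refine lt_of_lt_of_le hpos ?_
  apply Finset.single_le_sum (f := fun k => geomPMF q k * binomPMF n p (α - k)) ?_ hmem
  intro i _
  unfold geomPMF
  have := binom_nonneg n p hp0.le hp1.le (α - i)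
  have : (0:ℝ) ≤ 1 - q := by linarith
  positivity

-- L1: F n (β+1) = q * F n β + (1-q) * binomPMF n p (β+1)
lemma conv_shift (p q : ℝ) (n β : ℕ) :
    convPMF (geomPMF q) (binomPMF n p) (β+1)
      = q * convPMF (geomPMF q) (binomPMF n p) β + (1-q) * binomPMF n p (β+1) := by
  unfold convPMF
  rw [Finset.sum_range_succ' (fun k => geomPMF q k * binomPMF n p (β+1-k)) (β+1)]
  rw [Finset.mul_sum]
  congr 1
  · apply Finset.sum_congr rfl
    intro k _
    simp only [Nat.succ_sub_succ]
    unfold geomPMF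
    ring
  · unfold geomPMF
    simp

-- L2: F (n+1) (β+1) = (1-p) * F n (β+1) + p * F n β
lemma conv_succ (p q : ℝ) (n β : ℕ) :
    convPMF (geomPMF q) (binomPMF (n+1) p) (β+1)
      = (1-p) * convPMF (geomPMF q) (binomPMF n p) (β+1)
        + p * convPMF (geomPMF q) (binomPMF n p) β := by
  unfold convPMF
  rw [Finset.sum_range_succ (fun k => geomPMF q k * binomPMF (n+1) p (β+1-k)) (β+1),
      Finset.sum_range_succ (fun k => geomPMF q k * binomPMF n p (β+1-k)) (β+1)]
  have hcong : ∀ k ∈ Finset.range (β+1),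
      geomPMF q k * binomPMF (n+1) p (β+1-k)
        = (1-p) * (geomPMF q k * binomPMF n p (β+1-k))
          + p * (geomPMF q k * binomPMF n p (β-k)) := by
    intro k hk
    rw [Finset.mem_range] at hk
    have h : β + 1 - k = (β - k) + 1 := by omega
    rw [h, binom_succ]
    ring
  rw [Finset.sum_congr rfl hcong, Finset.sum_add_distrib]
  have h0 : binomPMF (n+1) p (β+1-(β+1)) = (1-p) * binomPMF n p (β+1-(β+1)) := by
    simp only [Nat.sub_self]
    unfold binomPMF
    simp [pow_succ]
    ring
  rw [h0, ← Finset.mul_sum, ← Finset.mul_sum]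
  ring

lemma conv_step (p q : ℝ) (hp0 : 0 < p) (hp1 : p < 1) (hq0 : 0 < q) (hq1 : q < 1)
    (n α : ℕ) :
    convPMF (geomPMF q) (binomPMF (n+1) p) α
      ≤ ((p + q * (1 - p)) / q) * convPMF (geomPMF q) (binomPMF n p) α := by
  have hc : (p + q * (1 - p)) / q = (1-p) + p / q := by field_simp; ring
  rw [hc]
  cases α with
  | zero =>
    unfold convPMF
    norm_num [Finset.sum_range_one]
    unfold geomPMF binomPMF
    norm_num [pow_succ]
    have hpn : (0:ℝ) ≤ (1-p)^n := pow_nonneg (by linarith) n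
    have h1 : (0:ℝ) ≤ (1-q) * ((1-p)^n) := by nlinarith
    have h2 : (0:ℝ) ≤ p / q := by positivity
    nlinarith [mul_nonneg h2 h1]
  | succ β =>
    rw [conv_succ]
    have hshift := conv_shift p q n β
    have hb := binom_nonneg n p hp0.le hp1.le (β+1)
    have hFβ : q * convPMF (geomPMF q) (binomPMF n p) β
        ≤ convPMF (geomPMF q) (binomPMF n p) (β+1) := by
      rw [hshift]; nlinarith
    have hFβ' : convPMF (geomPMF q) (binomPMF n p) β
        ≤ convPMF (geomPMF q) (binomPMF n p) (β+1) / q := by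
      rw [le_div_iff₀ hq0]; linarith [hFβ]
    have hFpos := conv_pos p q hp0 hp1 hq0 hq1 n (β+1)
    have : p * convPMF (geomPMF q) (binomPMF n p) β
        ≤ p / q * convPMF (geomPMF q) (binomPMF n p) (β+1) := by
      rw [div_mul_eq_mul_div, le_div_iff₀ hq0]
      nlinarith
    linarith [this]

theorem geom_binom_add_ratio_upper (p q : ℝ) (hp0 : 0 < p) (hp1 : p < 1)
    (hq0 : 0 < q) (hq1 : q < 1) (α n m : ℕ) :
    convPMF (geomPMF q) (binomPMF (n + m) p) α / convPMF (geomPMF q) (binomPMF n p) α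
      ≤ ((p + q * (1 - p)) / q) ^ m := by
  have hpos := conv_pos p q hp0 hp1 hq0 hq1 n α
  rw [div_le_iff₀ hpos]
  induction m with
  | zero => simp
  | succ k ih =>
    have hstep := conv_step p q hp0 hp1 hq0 hq1 (n+k) α
    have hcpos : (0:ℝ) < (p + q * (1 - p)) / q := by
      have : (0:ℝ) < 1 - p := by linarith
      positivity
    calc convPMF (geomPMF q) (binomPMF (n + (k+1)) p) α
        = convPMF (geomPMF q) (binomPMF ((n + k) + 1) p) α := by ring_nf
      _ ≤ ((p + q * (1 - p)) / q) * convPMF (geomPMF q) (binomPMF (n+k) p) α := hstep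
      _ ≤ ((p + q * (1 - p)) / q) * (((p + q * (1 - p)) / q) ^ k * convPMF (geomPMF q) (binomPMF n p) α) := by
          exact mul_le_mul_of_nonneg_left ih hcpos.le
      _ = ((p + q * (1 - p)) / q) ^ (k+1) * convPMF (geomPMF q) (binomPMF n p) α := by ring
end

section
/- For any nonnegative integers α, n, m, letting G be geometric on {0,1,2,...} with parameter 1-q and B_k Binomial(k,p) independent of G, the ratio Pr(G+B_n=α)/Pr(G+B_{n+m}=α) is at most (1/(1-p))^m. -/
open Finset

lemma pow_mul_binomPMF_le_binomPMF_add {p : ℝ} (hp0 : 0 ≤ p) (hp1 : p ≤ 1) (n m k : ℕ) :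
    (1 - p) ^ m * binomPMF n p k ≤ binomPMF (n + m) p k := by
  have hp : 0 ≤ 1 - p := sub_nonneg.2 hp1
  have hchoose : (n.choose k : ℝ) ≤ (n + m).choose k := by
    exact_mod_cast Nat.choose_le_choose k (Nat.le_add_right n m)
  have hfail : (1 - p) ^ m * (1 - p) ^ (n - k) ≤ (1 - p) ^ (n + m - k) := by
    rw [← pow_add]
    exact pow_le_pow_of_le_one hp (by linarith) (by omega)
  unfold binomPMF
  calc (1 - p) ^ m * (n.choose k * p ^ k * (1 - p) ^ (n - k))
      = n.choose k * p ^ k * ((1 - p) ^ m * (1 - p) ^ (n - k)) := by ring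
    _ ≤ (n + m).choose k * p ^ k * (1 - p) ^ (n + m - k) := by gcongr

lemma mul_convPMF_le {f g h : ℕ → ℝ} {c : ℝ} (hf : ∀ k, 0 ≤ f k) (hgh : ∀ k, c * g k ≤ h k)
    (α : ℕ) : c * convPMF f g α ≤ convPMF f h α := by
  unfold convPMF
  rw [mul_sum]
  refine sum_le_sum fun k _ => ?_
  rw [mul_left_comm]
  exact mul_le_mul_of_nonneg_left (hgh _) (hf k)

theorem geom_binom_add_ratio_lower (p q : ℝ) (hp0 : 0 < p) (hp1 : p < 1)
    (hq0 : 0 < q) (hq1 : q < 1) (α n m : ℕ) :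
    convPMF (geomPMF q) (binomPMF n p) α / convPMF (geomPMF q) (binomPMF (n + m) p) α
      ≤ (1 / (1 - p)) ^ m := by
  have hgeom := geomPMF_nonneg hq0.le hq1.le
  have hpow : 0 < (1 - p) ^ m := pow_pos (sub_pos.2 hp1) m
  rw [one_div, inv_pow]
  refine div_le_of_le_mul₀ (convPMF_nonneg hgeom (binomPMF_nonneg hp0.le hp1.le _) α)
    (inv_nonneg.2 hpow.le) ?_
  rw [le_inv_mul_iff₀ hpow]
  exact mul_convPMF_le hgeom (pow_mul_binomPMF_le_binomPMF_add hp0.le hp1.le n m) α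
end

section
/- For any nonnegative integer α > n, the ratio Pr(G+B_{n+1}=α)/Pr(G+B_n=α) equals exactly 1-p+p/q, where G is geometric on {0,1,...} with Pr(G=k)=q^k(1-q) and B_k is Binomial(k,p) independent of G. -/
open Finset

/-! The geometric pmf is `(1 - q) q^k`, so `P(G + X = α) = (1 - q) q^α E[q⁻¹^X]` as long as
`X ≤ α`. For `X ~ Binomial(n, p)` and `n ≤ α` this is `(1 - q) q^α (1 - p + p/q)^n`, and the
ratio of consecutive values of `n` is the factor `1 - p + p/q`. -/

lemma binomPMF_eq_zero_of_lt {n k : ℕ} (p : ℝ) (h : n < k) : binomPMF n p k = 0 := by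
  simp [binomPMF, Nat.choose_eq_zero_of_lt h]

lemma sum_binomPMF_mul_pow (n : ℕ) (p x : ℝ) :
    ∑ k ∈ range (n + 1), binomPMF n p k * x ^ k = (1 - p + p * x) ^ n := by
  rw [add_comm (1 - p), add_pow]
  refine sum_congr rfl fun k _ => ?_
  rw [binomPMF, mul_pow]
  ring

lemma sum_binomPMF_mul_pow_of_le {n m : ℕ} (h : n ≤ m) (p x : ℝ) :
    ∑ k ∈ range (m + 1), binomPMF n p k * x ^ k = (1 - p + p * x) ^ n := by
  rw [← sum_binomPMF_mul_pow, eq_comm]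
  refine sum_subset (range_subset_range.mpr (by omega)) fun k _ hk => ?_
  rw [binomPMF_eq_zero_of_lt p (by simpa using hk), zero_mul]

lemma convPMF_geomPMF {q : ℝ} (hq : q ≠ 0) (f : ℕ → ℝ) (α : ℕ) :
    convPMF (geomPMF q) f α = geomPMF q α * ∑ k ∈ range (α + 1), f k * q⁻¹ ^ k := by
  rw [convPMF, ← sum_range_reflect, mul_sum]
  refine sum_congr rfl fun k hk => ?_
  have hkα : k ≤ α := Nat.lt_succ_iff.mp (mem_range.mp hk)
  rw [show α + 1 - 1 - k = α - k by omega, Nat.sub_sub_self hkα, geomPMF, geomPMF,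
    pow_sub₀ q hq hkα, inv_pow]
  ring

lemma convPMF_geomPMF_binomPMF {q : ℝ} (hq : q ≠ 0) (p : ℝ) {n α : ℕ} (h : n ≤ α) :
    convPMF (geomPMF q) (binomPMF n p) α = geomPMF q α * (1 - p + p / q) ^ n := by
  rw [convPMF_geomPMF hq, sum_binomPMF_mul_pow_of_le h, div_eq_mul_inv]

theorem geom_binom_succ_ratio_exact_large_general (p q : ℝ) (hp0 : 0 < p)
    (hq0 : 0 < q) (hq1 : q < 1) (n α : ℕ) (hα : n < α) :
    convPMF (geomPMF q) (binomPMF (n + 1) p) α / convPMF (geomPMF q) (binomPMF n p) α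
      = 1 - p + p / q := by
  have hgeom : geomPMF q α ≠ 0 := mul_ne_zero (pow_ne_zero _ hq0.ne') (by linarith)
  have hfactor : 1 - p + p / q ≠ 0 := by
    have : p < p / q := (lt_div_iff₀ hq0).mpr (mul_lt_of_lt_one_right hp0 hq1)
    linarith
  rw [convPMF_geomPMF_binomPMF hq0.ne' p hα, convPMF_geomPMF_binomPMF hq0.ne' p hα.le,
    pow_succ, ← mul_assoc, mul_div_cancel_left₀ _ (mul_ne_zero hgeom (pow_ne_zero n hfactor))]

theorem geom_binom_succ_ratio_exact_large (p q : ℝ) (hp0 : 0 < p) (hp1 : p < 1)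
    (hq0 : 0 < q) (hq1 : q < 1) (n α : ℕ) (hα : n < α) :
    convPMF (geomPMF q) (binomPMF (n + 1) p) α / convPMF (geomPMF q) (binomPMF n p) α
      = 1 - p + p / q :=
  geom_binom_succ_ratio_exact_large_general p q hp0 hq0 hq1 n α hα
end
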